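/- For every f ∈ ℝ^V, the function α ↦ ‖u_α‖₂ mapping the regularization parameter to the ℓ² norm of the ROF minimizer is nonincreasing on [0,∞): if 0 ≤ β₁ ≤ β₂ then ‖u_{β₂}‖₂ ≤ ‖u_{β₁}‖₂. -/

import Mathlib

open Finset MeasureTheory

noncomputable section

/-- The graph total variation `J(u) = ∑_{(v,w) ∈ E} |u(w) - u(v)|`. -/
def tvJ {V : Type*} (E : Finset (V × V)) (u : V → ℝ) : ℝ :=
  ∑ e ∈ E, |u e.2 - u e.1|

/-- The subdifferential of the graph total variation at `u`. -/
def subdiffJ {V : Type*} [Fintype V] (E : Finset (V × V)) (u : V → ℝ) : Set (V → ℝ) :=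
  {us | ∀ h : V → ℝ, (∑ v, (h v - u v) * us v) + tvJ E u ≤ tvJ E h}

/-- The divergence of an edge function `H`:
`(div H)(v) = ∑_{(w,v) ∈ E} H((w,v)) - ∑_{(v,w) ∈ E} H((v,w))`. -/
def gdiv {V : Type*} [DecidableEq V] (E : Finset (V × V)) (H : V × V → ℝ) : V → ℝ :=
  fun v => (∑ e ∈ E, if e.2 = v then H e else 0) - (∑ e ∈ E, if e.1 = v then H e else 0)

/-- The ℓ² norm on `ℝ^V`. -/
def norm2 {V : Type*} [Fintype V] (u : V → ℝ) : ℝ :=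
  Real.sqrt (∑ v, (u v) ^ 2)

/-- `u` minimizes `w ↦ ½‖f - w‖₂² + α J(w)` over `ℝ^V`. -/
def IsROFMinimizer {V : Type*} [Fintype V] (E : Finset (V × V)) (f : V → ℝ) (α : ℝ)
    (u : V → ℝ) : Prop :=
  ∀ w : V → ℝ,
    (1 / 2) * (∑ v, (f v - u v) ^ 2) + α * tvJ E u ≤
      (1 / 2) * (∑ v, (f v - w v) ^ 2) + α * tvJ E w

/-- `u : [0,∞) → ℝ^V` is a TV flow solution with datum `f`: it is Lipschitz on `[0,∞)`,
`u(0) = f`, and `-u'(t) ∈ ∂J(u(t))` for almost every `t > 0`. -/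
def IsTVFlowSolution {V : Type*} [Fintype V] (E : Finset (V × V)) (f : V → ℝ)
    (u : ℝ → V → ℝ) : Prop :=
  u 0 = f ∧ (∃ L : NNReal, LipschitzOnWith L u (Set.Ici 0)) ∧
    ∃ u' : ℝ → V → ℝ, ∀ᵐ t ∂(volume : Measure ℝ), 0 < t →
      HasDerivAt u (u' t) t ∧ (fun v => -(u' t v)) ∈ subdiffJ E (u t)

/-!
A minimizer `u` of the ROF functional satisfies the variational inequality
`⟨f - u, h - u⟩ ≤ α (J h - J u)`, obtained by comparing `u` with `u + t (h - u)` and letting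
`t → 0⁺`. Since `J` is positively homogeneous, this splits into `⟨f - u, u⟩ = α J u` and
`⟨f - u, h⟩ ≤ α J h`. For `β₁ ≤ β₂` these give `⟨u₁ - u₂, u₂⟩ = β₂ J u₂ - ⟨f - u₁, u₂⟩ ≥ 0`,
whence `‖u₁‖² = ‖u₂‖² + 2 ⟨u₁ - u₂, u₂⟩ + ‖u₁ - u₂‖² ≥ ‖u₂‖²`.
-/

open Filter Topology

lemma nonneg_of_forall_mem_Ioc_nonneg_add_mul {a b : ℝ}
    (h : ∀ t ∈ Set.Ioc (0 : ℝ) 1, 0 ≤ a + b * t) : 0 ≤ a := by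
  have hcont : Continuous fun t : ℝ => a + b * t := by fun_prop
  have hlim : Tendsto (fun t => a + b * t) (𝓝[>] 0) (𝓝 a) := by
    simpa using (hcont.tendsto 0).mono_left nhdsWithin_le_nhds
  exact ge_of_tendsto hlim (eventually_of_mem (Ioc_mem_nhdsGT zero_lt_one) h)

lemma sum_sq_le_sum_sq_of_sum_sub_mul_nonneg {ι : Type*} (s : Finset ι) {x y : ι → ℝ}
    (h : 0 ≤ ∑ i ∈ s, (x i - y i) * y i) : ∑ i ∈ s, y i ^ 2 ≤ ∑ i ∈ s, x i ^ 2 := by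
  have hsplit : ∑ i ∈ s, x i ^ 2
      = ∑ i ∈ s, y i ^ 2 + 2 * ∑ i ∈ s, (x i - y i) * y i + ∑ i ∈ s, (x i - y i) ^ 2 := by
    rw [Finset.mul_sum, ← Finset.sum_add_distrib, ← Finset.sum_add_distrib]
    exact Finset.sum_congr rfl fun i _ => by ring
  have hsq : 0 ≤ ∑ i ∈ s, (x i - y i) ^ 2 := Finset.sum_nonneg fun i _ => sq_nonneg _
  linarith

section TotalVariation

variable {V : Type*} (E : Finset (V × V))

lemma tvJ_nonneg (u : V → ℝ) : 0 ≤ tvJ E u :=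
  Finset.sum_nonneg fun _ _ => abs_nonneg _

lemma tvJ_const_mul {c : ℝ} (hc : 0 ≤ c) (u : V → ℝ) :
    tvJ E (fun v => c * u v) = c * tvJ E u := by
  simp only [tvJ, Finset.mul_sum, ← mul_sub, abs_mul, abs_of_nonneg hc]

lemma tvJ_add_mul_sub_le (u h : V → ℝ) {t : ℝ} (ht₀ : 0 ≤ t) (ht₁ : t ≤ 1) :
    tvJ E (fun v => u v + t * (h v - u v)) ≤ (1 - t) * tvJ E u + t * tvJ E h := by
  simp only [tvJ, Finset.mul_sum, ← Finset.sum_add_distrib]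
  refine Finset.sum_le_sum fun e _ => ?_
  calc |u e.2 + t * (h e.2 - u e.2) - (u e.1 + t * (h e.1 - u e.1))|
      = |(1 - t) * (u e.2 - u e.1) + t * (h e.2 - h e.1)| := by ring_nf
    _ ≤ |(1 - t) * (u e.2 - u e.1)| + |t * (h e.2 - h e.1)| := abs_add_le _ _
    _ = (1 - t) * |u e.2 - u e.1| + t * |h e.2 - h e.1| := by
        rw [abs_mul, abs_mul, abs_of_nonneg (sub_nonneg.mpr ht₁), abs_of_nonneg ht₀]

end TotalVariation

namespace IsROFMinimizer

variable {V : Type*} [Fintype V] {E : Finset (V × V)} {f u : V → ℝ} {α : ℝ}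

theorem sum_mul_sub_le (hu : IsROFMinimizer E f α u) (hα : 0 ≤ α) (h : V → ℝ) :
    ∑ v, (f v - u v) * (h v - u v) ≤ α * (tvJ E h - tvJ E u) := by
  set S := ∑ v, (f v - u v) * (h v - u v)
  set Q := ∑ v, (h v - u v) ^ 2
  suffices ∀ t ∈ Set.Ioc (0 : ℝ) 1, 0 ≤ (α * (tvJ E h - tvJ E u) - S) + Q / 2 * t from
    sub_nonneg.mp (nonneg_of_forall_mem_Ioc_nonneg_add_mul this)
  rintro t ⟨ht₀, ht₁⟩
  have hmin := hu (fun v => u v + t * (h v - u v))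
  have hconv := mul_le_mul_of_nonneg_left (tvJ_add_mul_sub_le E u h ht₀.le ht₁) hα
  have hexpand : ∑ v, (f v - (u v + t * (h v - u v))) ^ 2
      = ∑ v, (f v - u v) ^ 2 - 2 * t * S + t ^ 2 * Q := by
    rw [Finset.mul_sum, Finset.mul_sum, ← Finset.sum_sub_distrib, ← Finset.sum_add_distrib]
    exact Finset.sum_congr rfl fun v _ => by ring
  rw [hexpand] at hmin
  have : 0 ≤ t * ((α * (tvJ E h - tvJ E u) - S) + Q / 2 * t) := by nlinarith
  exact nonneg_of_mul_nonneg_right this ht₀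

theorem sum_mul_self_eq (hu : IsROFMinimizer E f α u) (hα : 0 ≤ α) :
    ∑ v, (f v - u v) * u v = α * tvJ E u := by
  have hzero := hu.sum_mul_sub_le hα 0
  have htwice := hu.sum_mul_sub_le hα (fun v => 2 * u v)
  have hJzero : tvJ E (0 : V → ℝ) = 0 := by simp [tvJ]
  rw [hJzero] at hzero
  rw [tvJ_const_mul E zero_le_two] at htwice
  simp only [Pi.zero_apply, zero_sub, mul_neg, Finset.sum_neg_distrib] at hzero
  simp only [two_mul, add_sub_cancel_right] at htwice
  linarith

theorem sum_mul_le (hu : IsROFMinimizer E f α u) (hα : 0 ≤ α) (h : V → ℝ) :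
    ∑ v, (f v - u v) * h v ≤ α * tvJ E h := by
  have hsplit : ∑ v, (f v - u v) * h v
      = ∑ v, (f v - u v) * (h v - u v) + ∑ v, (f v - u v) * u v := by
    rw [← Finset.sum_add_distrib]
    exact Finset.sum_congr rfl fun v _ => by ring
  linarith [hu.sum_mul_sub_le hα h, hu.sum_mul_self_eq hα]

end IsROFMinimizer

theorem rof_norm_nonincreasing_general
    {V : Type*} [Fintype V] (E : Finset (V × V))
    (f : V → ℝ) (β₁ β₂ : ℝ) (hβ₁ : 0 ≤ β₁) (hβ : β₁ ≤ β₂)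
    (u₁ u₂ : V → ℝ) (hu₁ : IsROFMinimizer E f β₁ u₁) (hu₂ : IsROFMinimizer E f β₂ u₂) :
    norm2 u₂ ≤ norm2 u₁ := by
  have hself := hu₂.sum_mul_self_eq (hβ₁.trans hβ)
  have hcross := hu₁.sum_mul_le hβ₁ u₂
  have hmono : β₁ * tvJ E u₂ ≤ β₂ * tvJ E u₂ :=
    mul_le_mul_of_nonneg_right hβ (tvJ_nonneg E u₂)
  have hdiff : ∑ v, (u₁ v - u₂ v) * u₂ v
      = ∑ v, (f v - u₂ v) * u₂ v - ∑ v, (f v - u₁ v) * u₂ v := by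
    rw [← Finset.sum_sub_distrib]
    exact Finset.sum_congr rfl fun v _ => by ring
  have hinner : 0 ≤ ∑ v, (u₁ v - u₂ v) * u₂ v := by linarith
  exact Real.sqrt_le_sqrt (sum_sq_le_sum_sq_of_sum_sub_mul_nonneg Finset.univ hinner)

/-- the ℓ² norm of the ROF minimizer is nonincreasing as a function of the
regularization parameter. -/
theorem rof_norm_nonincreasing
    {V : Type*} [Fintype V] [DecidableEq V] [Nonempty V] (E : Finset (V × V))
    (hE : ∀ v w : V, (v, w) ∈ E → (w, v) ∉ E)
    (hconn : (SimpleGraph.fromRel (fun v w : V => (v, w) ∈ E)).Connected)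
    (f : V → ℝ) (β₁ β₂ : ℝ) (hβ₁ : 0 ≤ β₁) (hβ : β₁ ≤ β₂)
    (u₁ u₂ : V → ℝ) (hu₁ : IsROFMinimizer E f β₁ u₁) (hu₂ : IsROFMinimizer E f β₂ u₂) :
    norm2 u₂ ≤ norm2 u₁ :=
  rof_norm_nonincreasing_general E f β₁ β₂ hβ₁ hβ u₁ u₂ hu₁ hu₂
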